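/- Let l ∈ {K4, KD4, S4}, let φ be a modal formula, let s be a maximal state for l with respect to φ such that th(s) is complete for l, let d be a maximal state for l with respect to φ, and let ψ be a modal formula. If th(s) → ◇th(d) is valid for l, th(s) ↔ th(d) is not valid for l, and th(d) ∧ □ψ is satisfiable for l, then th(s) ∧ □(¬th(d) ∨ □ψ) is satisfiable for l. -/

import Mathlib

/-- Modal formulas in negation normal form, as in the paper:
φ ::= ⊥ | ⊤ | p | ¬p | φ∧φ | φ∨φ | □φ | ◇φ. -/
inductive Form : Type where
  | bot : Form
  | top : Form
  | pos : ℕ → Form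
  | npos : ℕ → Form
  | and : Form → Form → Form
  | or : Form → Form → Form
  | box : Form → Form
  | dia : Form → Form
deriving DecidableEq

namespace Form

/-- Negation, defined as usual (by De Morgan dualities). -/
def neg : Form → Form
  | bot => top
  | top => bot
  | pos p => npos p
  | npos p => pos p
  | and φ ψ => or φ.neg ψ.neg
  | or φ ψ => and φ.neg ψ.neg
  | box φ => dia φ.neg
  | dia φ => box φ.neg

/-- Implication φ → ψ, defined as usual. -/
def imp (φ ψ : Form) : Form := or φ.neg ψ

/-- Bi-implication φ ↔ ψ, defined as usual. -/
def biimp (φ ψ : Form) : Form := and (imp φ ψ) (imp ψ φ)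

/-- P(φ): the set of propositional variables occurring in φ. -/
def vars : Form → Finset ℕ
  | bot => ∅
  | top => ∅
  | pos p => {p}
  | npos p => {p}
  | and φ ψ => φ.vars ∪ ψ.vars
  | or φ ψ => φ.vars ∪ ψ.vars
  | box φ => φ.vars
  | dia φ => φ.vars

/-- Modal depth. -/
def md : Form → ℕ
  | bot => 0
  | top => 0
  | pos _ => 0
  | npos _ => 0
  | and φ ψ => max φ.md ψ.md
  | or φ ψ => max φ.md ψ.md
  | box φ => φ.md + 1
  | dia φ => φ.md + 1

/-- sub(φ): the set of subformulas of φ. -/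
def subf : Form → Finset Form
  | bot => {bot}
  | top => {top}
  | pos p => {pos p}
  | npos p => {npos p}
  | and φ ψ => insert (and φ ψ) (φ.subf ∪ ψ.subf)
  | or φ ψ => insert (or φ ψ) (φ.subf ∪ ψ.subf)
  | box φ => insert (box φ) φ.subf
  | dia φ => insert (dia φ) φ.subf

/-- s̄ub(φ) = sub(φ) ∪ {¬ψ : ψ ∈ sub(φ)}. -/
def subBar (φ : Form) : Finset Form := φ.subf ∪ φ.subf.image neg

/-- □^k φ : k nested boxes. -/
def boxIter : ℕ → Form → Form
  | 0, φ => φ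
  | n + 1, φ => box (boxIter n φ)

def isDia : Form → Bool
  | dia _ => true
  | _ => false

def isBox : Form → Bool
  | box _ => true
  | _ => false

end Form

/-- Big conjunction over a finite set of formulas (⋀∅ = ⊤). -/
noncomputable def bigAnd (s : Finset Form) : Form := s.toList.foldr Form.and Form.top

/-- Big disjunction over a finite set of formulas (⋁∅ = ⊥). -/
noncomputable def bigOr (s : Finset Form) : Form := s.toList.foldr Form.or Form.bot

/-- th(a) = ⋀ a. -/
noncomputable def th (a : Finset Form) : Form := bigAnd a

/-- A finite Kripke model: a nonempty finite set of states, an accessibility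
relation and a valuation. -/
structure Model : Type 1 where
  W : Type
  nonempty : Nonempty W
  finite : Finite W
  R : W → W → Prop
  V : W → Set ℕ

/-- Satisfaction M,w ⊨ φ. -/
def Model.sat (M : Model) : M.W → Form → Prop
  | _, .bot => False
  | _, .top => True
  | w, .pos p => p ∈ M.V w
  | w, .npos p => p ∉ M.V w
  | w, .and φ ψ => M.sat w φ ∧ M.sat w ψ
  | w, .or φ ψ => M.sat w φ ∨ M.sat w ψ
  | w, .box φ => ∀ v, M.R w v → M.sat v φ
  | w, .dia φ => ∃ v, M.R w v ∧ M.sat v φ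

/-- The six base logics K, D, T, K4, KD4, S4. -/
inductive BaseLogic : Type where
  | K | D | T | K4 | KD4 | S4
deriving DecidableEq

/-- A logic: a base logic, possibly extended by axiom 5. -/
structure Logic : Type where
  base : BaseLogic
  has5 : Bool
deriving DecidableEq

def Logic.K : Logic := ⟨.K, false⟩
def Logic.D : Logic := ⟨.D, false⟩
def Logic.T : Logic := ⟨.T, false⟩
def Logic.K4 : Logic := ⟨.K4, false⟩
def Logic.KD4 : Logic := ⟨.KD4, false⟩
def Logic.S4 : Logic := ⟨.S4, false⟩

/-- l + 5. -/
def BaseLogic.plus5 (b : BaseLogic) : Logic := ⟨b, true⟩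

/-- M is a model for the logic l (frame conditions). -/
def Model.IsFor (M : Model) (l : Logic) : Prop :=
  (match l.base with
    | .K => True
    | .D => ∀ w, ∃ v, M.R w v
    | .T => ∀ w, M.R w w
    | .K4 => ∀ a b c, M.R a b → M.R b c → M.R a c
    | .KD4 => (∀ w, ∃ v, M.R w v) ∧ (∀ a b c, M.R a b → M.R b c → M.R a c)
    | .S4 => (∀ w, M.R w w) ∧ (∀ a b c, M.R a b → M.R b c → M.R a c))
  ∧ (l.has5 = true → ∀ a b c, M.R a b → M.R a c → M.R b c)

/-- φ is satisfiable for l: satisfied at some state of some finite model for l. -/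
def Satisfiable (l : Logic) (φ : Form) : Prop :=
  ∃ M : Model, M.IsFor l ∧ ∃ w : M.W, M.sat w φ

/-- φ is valid for l: satisfied at every state of every finite model for l. -/
def Valid (l : Logic) (φ : Form) : Prop :=
  ∀ M : Model, M.IsFor l → ∀ w : M.W, M.sat w φ

/-- φ is complete for l: for every ψ ∈ L(P(φ)), φ→ψ or φ→¬ψ is valid for l. -/
def Complete (l : Logic) (φ : Form) : Prop :=
  ∀ ψ : Form, ψ.vars ⊆ φ.vars → (Valid l (φ.imp ψ) ∨ Valid l (φ.imp ψ.neg))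

/-- Z is a bisimulation modulo P from M to M'. -/
def IsBisim (P : Set ℕ) (M M' : Model) (Z : M.W → M'.W → Prop) : Prop :=
  (∃ s s', Z s s') ∧
  ∀ s s', Z s s' →
    (M.V s ∩ P = M'.V s' ∩ P) ∧
    (∀ t, M.R s t → ∃ t', M'.R s' t' ∧ Z t t') ∧
    (∀ t', M'.R s' t' → ∃ t, M.R s t ∧ Z t t')

/-- (M,a) ∼_P (M',a'). -/
def Bisimilar (P : Set ℕ) (M : Model) (a : M.W) (M' : Model) (a' : M'.W) : Prop :=
  ∃ Z, IsBisim P M M' Z ∧ Z a a'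

/-- (M,a) ≡_P (M',a'): the two pointed models satisfy the same formulas of L(P). -/
def EquivP (P : Set ℕ) (M : Model) (a : M.W) (M' : Model) (a' : M'.W) : Prop :=
  ∀ φ : Form, ↑φ.vars ⊆ P → (M.sat a φ ↔ M'.sat a' φ)

/-- (M,s) is flat (for base logic l, with axiom 5): the carrier is {s}∪W and
R = R1 ∪ R2 with R1 ⊆ {s}×W, R2 an equivalence relation on W, and s ∈ W if
l ∈ {T,S4}. -/
def Flat (l : BaseLogic) (M : Model) (s : M.W) : Prop :=
  ∃ W : Set M.W, (∀ w, w = s ∨ w ∈ W) ∧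
    ∃ R1 R2 : M.W → M.W → Prop,
      (∀ x y, M.R x y ↔ (R1 x y ∨ R2 x y)) ∧
      (∀ x y, R1 x y → x = s ∧ y ∈ W) ∧
      (∀ x y, R2 x y → x ∈ W ∧ y ∈ W) ∧
      (∀ x ∈ W, R2 x x) ∧
      (∀ x y, R2 x y → R2 y x) ∧
      (∀ x y z, R2 x y → R2 y z → R2 x z) ∧
      ((l = .T ∨ l = .S4) → s ∈ W)

/-- A maximal state for l with respect to φ: a maximally l-consistent subset
of s̄ub(φ). -/
def MaxState (l : Logic) (φ : Form) (a : Finset Form) : Prop :=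
  a ⊆ φ.subBar ∧ Satisfiable l (th a) ∧ ∀ ψ ∈ φ.subf, ψ ∈ a ∨ ψ.neg ∈ a

/-- D(x) = {◇ψ : ◇ψ ∈ x}. -/
def DSet (x : Finset Form) : Finset Form := x.filter (fun ψ => ψ.isDia = true)

/-- B(x) = {□ψ : □ψ ∈ x}. -/
def BSet (x : Finset Form) : Finset Form := x.filter (fun ψ => ψ.isBox = true)

/-- A view: a parent-state and a finite set of children-states. -/
structure View : Type where
  parent : Finset Form
  children : Finset (Finset Form)

/-- The view is with respect to φ: all its states are subsets of s̄ub(φ). -/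
def View.WF (φ : Form) (S : View) : Prop :=
  S.parent ⊆ φ.subBar ∧ ∀ c ∈ S.children, c ⊆ φ.subBar

/-- A set of formulas is l-closed. -/
def LClosed (l : Logic) (P : Finset ℕ) (s : Finset Form) : Prop :=
  (∀ φ1 φ2 : Form, Form.and φ1 φ2 ∈ s → φ1 ∈ s ∧ φ2 ∈ s) ∧
  (∀ φ1 φ2 : Form, Form.or φ1 φ2 ∈ s → φ1 ∈ s ∨ φ2 ∈ s) ∧
  ((l.base = .T ∨ l.base = .S4) → ∀ ψ : Form, Form.box ψ ∈ s → ψ ∈ s) ∧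
  (∀ p ∈ P, Form.pos p ∈ s ∨ Form.npos p ∈ s)

/-- The view S is l-complete. -/
def ViewLComplete (l : Logic) (P : Finset ℕ) (S : View) : Prop :=
  LClosed l P S.parent ∧
  (∀ c ∈ S.children, LClosed l P c) ∧
  (∀ ψ : Form, Form.dia ψ ∈ S.parent → ∃ c ∈ S.children, ψ ∈ c) ∧
  (∀ ψ : Form, Form.box ψ ∈ S.parent → ∀ c ∈ S.children, ψ ∈ c) ∧
  ((l.base = .K4 ∨ l.base = .KD4 ∨ l.base = .S4) →
    ∀ ψ : Form, Form.box ψ ∈ S.parent → ∀ c ∈ S.children, Form.box ψ ∈ c) ∧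
  (l.base = .KD4 → S.children.Nonempty)

/-- The view S is consistent for l: every one of its states is consistent. -/
def ViewConsistent (l : Logic) (S : View) : Prop :=
  Satisfiable l (th S.parent) ∧ ∀ c ∈ S.children, Satisfiable l (th c)

/-- d = max{md(th(c')) : c' ∈ C(S)}. -/
noncomputable def childDepth (S : View) : ℕ := S.children.sup (fun c => (th c).md)

/-- A K-maximal child-state: a maximally K-consistent subset of s̄ub_d(φ). -/
def KMaxChild (φ : Form) (d : ℕ) (c : Finset Form) : Prop :=
  c ⊆ φ.subBar.filter (fun ψ => ψ.md ≤ d) ∧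
  Satisfiable Logic.K (th c) ∧
  ∀ ψ ∈ φ.subf, ψ.md ≤ d → (ψ ∈ c ∨ ψ.neg ∈ c)

/-- S' completes S (for logic l, with respect to φ). -/
def ViewCompletes (l : Logic) (φ : Form) (S' S : View) : Prop :=
  ViewLComplete l φ.vars S' ∧
  S.parent ⊆ S'.parent ∧
  (∀ a ∈ S.children, ∃ a' ∈ S'.children, a ⊆ a') ∧
  (l.base = .K → ∀ a' ∈ S'.children, KMaxChild φ (childDepth S') a') ∧
  (l.base ≠ .K → ∀ a' ∈ S'.children, MaxState l φ a')

/-- The depth-0 normal form ⋀_{p∈S} p ∧ ⋀_{p∈P∖S} ¬p. -/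
noncomputable def nf0 (P S : Finset ℕ) : Form :=
  Form.and (bigAnd (S.image Form.pos)) (bigAnd ((P \ S).image Form.npos))

/-- Fine's normal forms F_P^d. -/
noncomputable def NF (P : Finset ℕ) : ℕ → Set Form
  | 0 => { χ | ∃ S ⊆ P, χ = nf0 P S }
  | d + 1 => { χ | ∃ S : Finset Form, ↑S ⊆ NF P d ∧ ∃ S0 ⊆ P,
      χ = Form.and (nf0 P S0)
            (Form.and (bigAnd (S.image Form.dia)) (Form.box (bigOr S))) }

/-- φ is complete up to its depth for l. -/
def CompleteUpToDepth (l : Logic) (φ : Form) : Prop :=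
  ∀ ψ : Form, ψ.vars ⊆ φ.vars → ψ.md ≤ φ.md →
    (Valid l (φ.imp ψ) ∨ Valid l (φ.imp ψ.neg))

/-!
The witness is obtained by surgery on a model `N, w ⊨ th(s)`: delete every world of `N`
satisfying `th(d)` and redirect each arrow into such a world to a world `b ⊨ th(d) ∧ □ψ` of a
second model `M` (and, to keep the relation transitive, to all `M`-successors of `b`). Since
`th(d)` decides every formula of `s̄ub(φ)`, the deleted worlds and `b` agree on `s̄ub(φ)`, so
the surviving worlds keep their `s̄ub(φ)`-theory; in particular `w` still satisfies `th(s)`, and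
it survives because `s ≠ d`. Every successor of `w` is now either a surviving world, hence
refutes `th(d)`, or lies in the transitive cone of `b`, hence satisfies `□ψ`.
-/

namespace Form

theorem neg_neg (α : Form) : α.neg.neg = α := by
  induction α <;> simp [neg, *]

theorem mem_subf_self (α : Form) : α ∈ α.subf := by
  cases α <;> simp [subf]

theorem subf_subset_of_mem {φ α : Form} (h : α ∈ φ.subf) : α.subf ⊆ φ.subf := by
  induction φ with
  | and φ₁ φ₂ ih₁ ih₂ | or φ₁ φ₂ ih₁ ih₂ =>
    simp only [subf, Finset.mem_insert, Finset.mem_union] at h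
    rcases h with rfl | h | h
    · rfl
    · exact (ih₁ h).trans (Finset.subset_union_left.trans (Finset.subset_insert _ _))
    · exact (ih₂ h).trans (Finset.subset_union_right.trans (Finset.subset_insert _ _))
  | box φ₁ ih | dia φ₁ ih =>
    simp only [subf, Finset.mem_insert] at h
    rcases h with rfl | h
    · rfl
    · exact (ih h).trans (Finset.subset_insert _ _)
  | _ => simp only [subf, Finset.mem_singleton] at h; subst h; rfl

theorem subf_neg (α : Form) : α.neg.subf = α.subf.image neg := by
  induction α <;> simp [neg, subf, Finset.image_insert, Finset.image_union, *]

theorem subf_subset_subBar {φ α : Form} (h : α ∈ φ.subBar) : α.subf ⊆ φ.subBar := by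
  simp only [subBar, Finset.mem_union, Finset.mem_image] at h
  rcases h with h | ⟨ξ, hξ, rfl⟩
  · exact (subf_subset_of_mem h).trans Finset.subset_union_left
  · rw [subf_neg]
    exact (Finset.image_subset_image (subf_subset_of_mem hξ)).trans Finset.subset_union_right

end Form

namespace Model

theorem sat_neg (M : Model) (α : Form) (w : M.W) : M.sat w α.neg ↔ ¬ M.sat w α := by
  induction α generalizing w with
  | and α β ih₁ ih₂ | or α β ih₁ ih₂ =>
    simp only [Form.neg, Model.sat, ih₁, ih₂]; tauto
  | box α ih | dia α ih => simp [Form.neg, Model.sat, ih]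
  | _ => simp [Form.neg, Model.sat]

theorem sat_th (M : Model) (w : M.W) (a : Finset Form) :
    M.sat w (th a) ↔ ∀ α ∈ a, M.sat w α := by
  suffices ∀ L : List Form, M.sat w (L.foldr Form.and Form.top) ↔ ∀ α ∈ L, M.sat w α by
    simp [th, bigAnd, this]
  intro L
  induction L <;> simp [Model.sat, *]

end Model

theorem valid_biimp_self (l : Logic) (θ : Form) : Valid l (θ.biimp θ) := by
  intro M _ w
  by_cases h : M.sat w θ
  · exact ⟨Or.inr h, Or.inr h⟩
  · exact ⟨Or.inl ((M.sat_neg θ w).2 h), Or.inl ((M.sat_neg θ w).2 h)⟩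

namespace MaxState

variable {l : Logic} {φ : Form} {d : Finset Form}

theorem mem_or_neg_mem (hd : MaxState l φ d) {χ : Form} (hχ : χ ∈ φ.subBar) :
    χ ∈ d ∨ χ.neg ∈ d := by
  simp only [Form.subBar, Finset.mem_union, Finset.mem_image] at hχ
  rcases hχ with h | ⟨ξ, hξ, rfl⟩
  · exact hd.2.2 χ h
  · rw [Form.neg_neg]
    exact (hd.2.2 ξ hξ).symm

theorem mem_of_sat (hd : MaxState l φ d) {χ : Form} (hχ : χ ∈ φ.subBar)
    {M : Model} {p : M.W} (hp : M.sat p (th d)) (hpχ : M.sat p χ) : χ ∈ d :=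
  (hd.mem_or_neg_mem hχ).resolve_right fun h => (M.sat_neg χ p).1 ((M.sat_th p d).1 hp _ h) hpχ

theorem sat_iff_of_sat_th (hd : MaxState l φ d) {χ : Form} (hχ : χ ∈ φ.subBar)
    {M M' : Model} {p : M.W} {q : M'.W} (hp : M.sat p (th d)) (hq : M'.sat q (th d)) :
    M.sat p χ ↔ M'.sat q χ :=
  ⟨fun h => (M'.sat_th q d).1 hq χ (hd.mem_of_sat hχ hp h),
    fun h => (M.sat_th p d).1 hp χ (hd.mem_of_sat hχ hq h)⟩

theorem eq_of_sat_th {s : Finset Form} (hs : MaxState l φ s) (hd : MaxState l φ d)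
    {M : Model} {w : M.W} (hws : M.sat w (th s)) (hwd : M.sat w (th d)) : s = d :=
  Finset.Subset.antisymm
    (fun _ hα => hd.mem_of_sat (hs.1 hα) hwd ((M.sat_th w s).1 hws _ hα))
    (fun _ hα => hs.mem_of_sat (hd.1 hα) hws ((M.sat_th w d).1 hwd _ hα))

end MaxState

namespace Model

def IsTransitive (M : Model) : Prop := ∀ ⦃x y z⦄, M.R x y → M.R y z → M.R x z

variable (N M : Model) (bad : N.W → Prop) (b : M.W)

def graftR : ({x : N.W // ¬ bad x} ⊕ M.W) → ({x : N.W // ¬ bad x} ⊕ M.W) → Prop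
  | .inl x, .inl x' => N.R x x'
  | .inl x, .inr y => (∃ u, bad u ∧ N.R x u) ∧ (y = b ∨ M.R b y)
  | .inr y, .inr y' => M.R y y'
  | .inr _, .inl _ => False

noncomputable def graft : Model where
  W := {x : N.W // ¬ bad x} ⊕ M.W
  nonempty := ⟨.inr (Classical.choice M.nonempty)⟩
  finite := by have := N.finite; have := M.finite; infer_instance
  R := graftR N M bad b
  V := Sum.elim (fun x => N.V x) M.V

variable {N M bad b}

theorem graft_transitive (hN : N.IsTransitive) (hM : M.IsTransitive) :
    (graft N M bad b).IsTransitive := by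
  rintro (x | y) (x' | y') (x'' | y'') h₁ h₂ <;> simp only [graft, graftR] at h₁ h₂ ⊢
  · exact hN h₁ h₂
  · obtain ⟨⟨u, hu, hR⟩, hy⟩ := h₂
    exact ⟨⟨u, hu, hN h₁ hR⟩, hy⟩
  · obtain ⟨hu, rfl | hby⟩ := h₁
    · exact ⟨hu, Or.inr h₂⟩
    · exact ⟨hu, Or.inr (hM hby h₂)⟩
  · exact hM h₁ h₂

theorem graft_serial (hN : ∀ x, ∃ y, N.R x y) (hM : ∀ x, ∃ y, M.R x y)
    (x : (graft N M bad b).W) : ∃ y, (graft N M bad b).R x y := by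
  rcases x with x | y
  · obtain ⟨v, hv⟩ := hN x
    by_cases hbad : bad v
    · exact ⟨.inr b, ⟨v, hbad, hv⟩, Or.inl rfl⟩
    · exact ⟨.inl ⟨v, hbad⟩, hv⟩
  · obtain ⟨v, hv⟩ := hM y
    exact ⟨.inr v, hv⟩

theorem graft_reflexive (hN : ∀ x, N.R x x) (hM : ∀ x, M.R x x) :
    ∀ x, (graft N M bad b).R x x := by
  rintro (x | y)
  · exact hN x.1
  · exact hM y

theorem graft_sat_inr (α : Form) (y : M.W) : (graft N M bad b).sat (.inr y) α ↔ M.sat y α := by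
  induction α generalizing y with
  | and α β ih₁ ih₂ | or α β ih₁ ih₂ => simp only [Model.sat, ih₁, ih₂]
  | box χ ih =>
    simp only [Model.sat]
    constructor
    · exact fun h v hv => (ih v).1 (h (.inr v) hv)
    · rintro h (u | v) hv
      · exact hv.elim
      · exact (ih v).2 (h v hv)
  | dia χ ih =>
    simp only [Model.sat]
    constructor
    · rintro ⟨u | v, hv, hχ⟩
      · exact hv.elim
      · exact ⟨v, hv, (ih v).1 hχ⟩
    · rintro ⟨v, hv, hχ⟩
      exact ⟨.inr v, hv, (ih v).2 hχ⟩
  | _ => simp [Model.sat, graft]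

theorem graft_sat_inl {Γ : Finset Form} (hΓ : ∀ α ∈ Γ, α.subf ⊆ Γ)
    (hN : N.IsTransitive) (hagree : ∀ u, bad u → ∀ χ ∈ Γ, N.sat u χ ↔ M.sat b χ)
    (α : Form) (hα : α ∈ Γ) (x : {x : N.W // ¬ bad x}) :
    (graft N M bad b).sat (.inl x) α ↔ N.sat x α := by
  induction α generalizing x with
  | and α β ih₁ ih₂ | or α β ih₁ ih₂ =>
    simp only [Model.sat, ih₁ (hΓ _ hα (by simp [Form.subf, Form.mem_subf_self])),
      ih₂ (hΓ _ hα (by simp [Form.subf, Form.mem_subf_self]))]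
  | box χ ih =>
    have hχ : χ ∈ Γ := hΓ _ hα (by simp [Form.subf, Form.mem_subf_self])
    simp only [Model.sat]
    constructor
    · intro h u hu
      by_cases hbad : bad u
      · exact (hagree u hbad χ hχ).2
          ((graft_sat_inr χ b).1 (h (.inr b) ⟨⟨u, hbad, hu⟩, .inl rfl⟩))
      · exact (ih hχ ⟨u, hbad⟩).1 (h (.inl ⟨u, hbad⟩) hu)
    · rintro h (u | y) hv
      · exact (ih hχ u).2 (h u hv)
      · obtain ⟨⟨u, hbad, hu⟩, rfl | hby⟩ := hv
        · exact (graft_sat_inr χ _).2 ((hagree u hbad χ hχ).1 (h u hu))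
        · have hbox : M.sat b (.box χ) := (hagree u hbad _ hα).1 fun v hv => h v (hN hu hv)
          exact (graft_sat_inr χ y).2 (hbox y hby)
  | dia χ ih =>
    have hχ : χ ∈ Γ := hΓ _ hα (by simp [Form.subf, Form.mem_subf_self])
    simp only [Model.sat]
    constructor
    · rintro ⟨u | y, hv, hsat⟩
      · exact ⟨u, hv, (ih hχ u).1 hsat⟩
      · obtain ⟨⟨u, hbad, hu⟩, rfl | hby⟩ := hv
        · exact ⟨u, hu, (hagree u hbad χ hχ).2 ((graft_sat_inr χ _).1 hsat)⟩
        · obtain ⟨v, hv, hvχ⟩ :=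
            (hagree u hbad _ hα).2 ⟨y, hby, (graft_sat_inr χ y).1 hsat⟩
          exact ⟨v, hN hu hv, hvχ⟩
    · rintro ⟨u, hu, hχu⟩
      by_cases hbad : bad u
      · exact ⟨.inr b, ⟨⟨u, hbad, hu⟩, .inl rfl⟩,
          (graft_sat_inr χ b).2 ((hagree u hbad χ hχ).1 hχu)⟩
      · exact ⟨.inl ⟨u, hbad⟩, hu, (ih hχ ⟨u, hbad⟩).2 hχu⟩
  | _ => simp [Model.sat, graft]

variable {l : Logic}

theorem IsFor.isTransitive (hl : l = Logic.K4 ∨ l = Logic.KD4 ∨ l = Logic.S4) {M : Model}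
    (hM : M.IsFor l) : M.IsTransitive := by
  rcases hl with rfl | rfl | rfl
  · exact fun a b c => hM.1 a b c
  · exact fun a b c => hM.1.2 a b c
  · exact fun a b c => hM.1.2 a b c

theorem graft_isFor (hl : l = Logic.K4 ∨ l = Logic.KD4 ∨ l = Logic.S4)
    (hN : N.IsFor l) (hM : M.IsFor l) : (graft N M bad b).IsFor l := by
  have htrans : ∀ x y z, _ := fun x y z =>
    @graft_transitive N M bad b (hN.isTransitive hl) (hM.isTransitive hl) x y z
  rcases hl with rfl | rfl | rfl
  · exact ⟨htrans, nofun⟩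
  · exact ⟨⟨graft_serial hN.1.1 hM.1.1, htrans⟩, nofun⟩
  · exact ⟨⟨graft_reflexive hN.1.1 hM.1.1, htrans⟩, nofun⟩

end Model

theorem stmt13_general (l : Logic) (hl : l = Logic.K4 ∨ l = Logic.KD4 ∨ l = Logic.S4)
    (φ ψ : Form) (s d : Finset Form)
    (hs : MaxState l φ s) (hd : MaxState l φ d)
    (h2 : ¬ Valid l ((th s).biimp (th d)))
    (h3 : Satisfiable l (Form.and (th d) (Form.box ψ))) :
    Satisfiable l (Form.and (th s) (Form.box (Form.or (th d).neg (Form.box ψ)))) := by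
  obtain ⟨N, hN, w, hws⟩ := hs.2.1
  obtain ⟨M, hM, b, hbd, hbψ⟩ := h3
  have hwd : ¬ N.sat w (th d) := fun hwd =>
    h2 (hs.eq_of_sat_th hd hws hwd ▸ valid_biimp_self l (th s))
  set G := Model.graft N M (fun u => N.sat u (th d)) b
  have hGsat : ∀ α ∈ φ.subBar, ∀ x, G.sat (.inl x) α ↔ N.sat x α :=
    Model.graft_sat_inl (fun _ => Form.subf_subset_subBar) (hN.isTransitive hl)
      fun u hu χ hχ => hd.sat_iff_of_sat_th hχ hu hbd
  refine ⟨G, Model.graft_isFor hl hN hM, .inl ⟨w, hwd⟩, ?_, ?_⟩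
  · exact (G.sat_th _ s).2 fun α hα => (hGsat α (hs.1 hα) _).2 ((N.sat_th w s).1 hws α hα)
  · rintro (u | y) hv
    · refine .inl ((G.sat_neg _ _).2 fun hud => u.2 ((N.sat_th u d).2 fun α hα => ?_))
      exact (hGsat α (hd.1 hα) u).1 ((G.sat_th _ d).1 hud α hα)
    · refine .inr ((Model.graft_sat_inr _ y).2 ?_)
      obtain ⟨-, rfl | hby⟩ := hv
      · exact hbψ
      · exact fun z hz => hbψ z (hM.isTransitive hl hby hz)

/-- for l ∈ {K4,KD4,S4}, maximal states s (with th(s) complete)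
and d, and a formula ψ: if th(s)→◇th(d) is valid, th(s)↔th(d) is not valid,
and th(d)∧□ψ is satisfiable, then th(s)∧□(¬th(d)∨□ψ) is satisfiable. -/
theorem stmt13 (l : Logic) (hl : l = Logic.K4 ∨ l = Logic.KD4 ∨ l = Logic.S4)
    (φ ψ : Form) (s d : Finset Form)
    (hs : MaxState l φ s) (hd : MaxState l φ d)
    (hscomp : Complete l (th s))
    (h1 : Valid l ((th s).imp (Form.dia (th d))))
    (h2 : ¬ Valid l ((th s).biimp (th d)))
    (h3 : Satisfiable l (Form.and (th d) (Form.box ψ))) :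
    Satisfiable l (Form.and (th s) (Form.box (Form.or (th d).neg (Form.box ψ)))) :=
  stmt13_general l hl φ ψ s d hs hd h2 h3
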